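/- arXiv:1407.5703 — 3 statements merged into one kernel-verified Lean document; each statement's English description precedes it below -/
import Mathlib

section
/- For complex numbers $w_1,w_2,x_1,x_2$, one has $|x_1w_2 - w_1x_2|^2 \leq |w_1^2-x_1^2|^2 + |w_2^2-x_2^2|^2 + |w_1w_2-x_1x_2|^2$. -/
/-! Squaring the left-hand side turns it into `(w₁w₂ - x₁x₂)² - (w₁² - x₁²)(w₂² - x₂²)`,
whose norm the triangle inequality and `ab ≤ a² + b²` bound by the right-hand side. -/

theorem sq_cross_sub_eq {R : Type*} [CommRing R] (w₁ w₂ x₁ x₂ : R) :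
    (x₁ * w₂ - w₁ * x₂) ^ 2 =
      (w₁ * w₂ - x₁ * x₂) ^ 2 - (w₁ ^ 2 - x₁ ^ 2) * (w₂ ^ 2 - x₂ ^ 2) := by
  ring

theorem norm_sq_le_of_sq_eq_sq_sub_mul {K : Type*} [NormedDivisionRing K] {u a b c : K}
    (h : u ^ 2 = c ^ 2 - a * b) : ‖u‖ ^ 2 ≤ ‖a‖ ^ 2 + ‖b‖ ^ 2 + ‖c‖ ^ 2 := by
  have hab : ‖a‖ * ‖b‖ ≤ ‖a‖ ^ 2 + ‖b‖ ^ 2 := by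
    nlinarith [two_mul_le_add_sq ‖a‖ ‖b‖, mul_nonneg (norm_nonneg a) (norm_nonneg b)]
  calc ‖u‖ ^ 2 = ‖c ^ 2 - a * b‖ := by rw [← norm_pow, h]
    _ ≤ ‖c‖ ^ 2 + ‖a‖ * ‖b‖ := (norm_sub_le _ _).trans_eq (by rw [norm_pow, norm_mul])
    _ ≤ ‖a‖ ^ 2 + ‖b‖ ^ 2 + ‖c‖ ^ 2 := by linarith

theorem stmt0 (w₁ w₂ x₁ x₂ : ℂ) :
    ‖x₁ * w₂ - w₁ * x₂‖ ^ 2 ≤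
      ‖w₁ ^ 2 - x₁ ^ 2‖ ^ 2 + ‖w₂ ^ 2 - x₂ ^ 2‖ ^ 2 +
        ‖w₁ * w₂ - x₁ * x₂‖ ^ 2 :=
  norm_sq_le_of_sq_eq_sq_sub_mul (sq_cross_sub_eq w₁ w₂ x₁ x₂)
end

section
/- Let $w=(w_1,w_2), x=(x_1,x_2)\in\mathbb{C}^2$ and set $\alpha^2 = |w_1^2-x_1^2|^2 + |w_2^2-x_2^2|^2 + |w_1w_2-x_1x_2|^2$, $\beta_-^2 = |w_1-x_1|^2+|w_2-x_2|^2$, $\beta_+^2 = |w_1+x_1|^2+|w_2+x_2|^2$. Then $\alpha^2 \leq \beta_+^2\beta_-^2 \leq 4\alpha^2$. -/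
/-!
With `a = w₁ + x₁`, `b = w₂ + x₂`, `c = w₁ - x₁`, `d = w₂ - x₂` the three differences factor as
`w₁² - x₁² = a c`, `w₂² - x₂² = b d` and `2 (w₁ w₂ - x₁ x₂) = a d + b c`, while
`β₊² β₋² = |ac|² + |bd|² + |ad|² + |bc|²`. So both inequalities compare `|ad + bc|²` with
`|ad|² + |bc|²`: from above by the triangle inequality, from below by the reverse triangle
inequality together with `|ad| |bc| = |ac| |bd| ≤ (|ac|² + |bd|²) / 2`.
-/

lemma sq_norm_add_le_two_mul {E : Type*} [SeminormedAddCommGroup E] (u v : E) :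
    ‖u + v‖ ^ 2 ≤ 2 * (‖u‖ ^ 2 + ‖v‖ ^ 2) := by
  nlinarith [norm_add_le u v, norm_nonneg (u + v), sq_nonneg (‖u‖ - ‖v‖)]

lemma sq_norm_sub_norm_le_sq_norm_add {E : Type*} [SeminormedAddCommGroup E] (u v : E) :
    (‖u‖ - ‖v‖) ^ 2 ≤ ‖u + v‖ ^ 2 := by
  have h := abs_norm_sub_norm_le u (-v)
  rw [norm_neg, sub_neg_eq_add] at h
  simpa only [sq_abs] using pow_le_pow_left₀ (abs_nonneg _) h 2

section NormedField

variable {𝕜 : Type*} [NormedField 𝕜]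

lemma sq_norm_add_sq_norm_mul_sq_norm_add_sq_norm (a b c d : 𝕜) :
    (‖a‖ ^ 2 + ‖b‖ ^ 2) * (‖c‖ ^ 2 + ‖d‖ ^ 2) =
      ‖a * c‖ ^ 2 + ‖b * d‖ ^ 2 + (‖a * d‖ ^ 2 + ‖b * c‖ ^ 2) := by
  simp only [norm_mul]
  ring

lemma sq_norm_mul_add_mul_le (a b c d : 𝕜) :
    ‖a * d + b * c‖ ^ 2 ≤ 4 * (‖a * d‖ ^ 2 + ‖b * c‖ ^ 2) := by
  nlinarith [sq_norm_add_le_two_mul (a * d) (b * c), sq_nonneg ‖a * d‖, sq_nonneg ‖b * c‖]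

lemma sq_norm_add_sq_norm_le_sq_norm_mul_add_mul (a b c d : 𝕜) :
    ‖a * d‖ ^ 2 + ‖b * c‖ ^ 2 ≤ 3 * (‖a * c‖ ^ 2 + ‖b * d‖ ^ 2) + ‖a * d + b * c‖ ^ 2 := by
  have hcross : ‖a * d‖ * ‖b * c‖ = ‖a * c‖ * ‖b * d‖ := by
    simp only [norm_mul]
    ring
  nlinarith [sq_norm_sub_norm_le_sq_norm_add (a * d) (b * c), sq_nonneg (‖a * c‖ - ‖b * d‖),
    sq_nonneg ‖a * c‖, sq_nonneg ‖b * d‖]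

end NormedField

theorem stmt1 (w₁ w₂ x₁ x₂ : ℂ) :
    ‖w₁ ^ 2 - x₁ ^ 2‖ ^ 2 + ‖w₂ ^ 2 - x₂ ^ 2‖ ^ 2 +
        ‖w₁ * w₂ - x₁ * x₂‖ ^ 2 ≤
      (‖w₁ + x₁‖ ^ 2 + ‖w₂ + x₂‖ ^ 2) *
        (‖w₁ - x₁‖ ^ 2 + ‖w₂ - x₂‖ ^ 2) ∧
    (‖w₁ + x₁‖ ^ 2 + ‖w₂ + x₂‖ ^ 2) *
        (‖w₁ - x₁‖ ^ 2 + ‖w₂ - x₂‖ ^ 2) ≤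
      4 * (‖w₁ ^ 2 - x₁ ^ 2‖ ^ 2 + ‖w₂ ^ 2 - x₂ ^ 2‖ ^ 2 +
        ‖w₁ * w₂ - x₁ * x₂‖ ^ 2) := by
  set a := w₁ + x₁
  set b := w₂ + x₂
  set c := w₁ - x₁
  set d := w₂ - x₂
  have h₁ : w₁ ^ 2 - x₁ ^ 2 = a * c := by ring
  have h₂ : w₂ ^ 2 - x₂ ^ 2 = b * d := by ring
  have h₃ : ‖w₁ * w₂ - x₁ * x₂‖ ^ 2 = ‖a * d + b * c‖ ^ 2 / 4 := by
    have : w₁ * w₂ - x₁ * x₂ = (a * d + b * c) / 2 := by ring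
    rw [this, norm_div, Complex.norm_two]
    ring
  rw [h₁, h₂, h₃, sq_norm_add_sq_norm_mul_sq_norm_add_sq_norm]
  constructor
  · linarith [sq_norm_mul_add_mul_le a b c d]
  · linarith [sq_norm_add_sq_norm_le_sq_norm_mul_add_mul a b c d]
end

section
/- Let $\tilde{D}, \tilde{D}' \subset\subset \mathbb{C}^2$ be bounded domains, $g \in L^\infty(\tilde{D}' \times \tilde{D})$, and let $f(w,x)$ be one of $x_1^2, x_1x_2, x_2^2$. Let $\alpha(w,x)^2 = |w_1^2-x_1^2|^2 + |w_2^2-x_2^2|^2 + |w_1w_2-x_1x_2|^2$. Suppose $\varphi$ is measurable on $\tilde{D}'$ with $\|w\|^{-2}\varphi \in L^\infty(\tilde{D}')$. Then the function $\mathcal{K}\varphi(x) = \int_{\tilde{D}'} \frac{g(w,x) f(w,x) \varphi(w)}{\alpha(w,x)^3}\, dV(w)$ is continuous at $x = 0$ with $\mathcal{K}\varphi(0) = 0$. -/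
open MeasureTheory

noncomputable instance (n : ℕ) : MeasurableSpace (EuclideanSpace ℂ (Fin n)) := borel _
instance (n : ℕ) : BorelSpace (EuclideanSpace ℂ (Fin n)) := ⟨rfl⟩
noncomputable instance (n : ℕ) : InnerProductSpace ℝ (EuclideanSpace ℂ (Fin n)) :=
  InnerProductSpace.rclikeToReal ℂ _

/-!
Write α(w, x) for the distance between the images of w and x under
(z₁, z₂) ↦ (z₁², z₂², z₁z₂), a map that identifies z with -z; accordingly
α(w, x) ≥ ‖w - x‖ ‖w + x‖ / 2. As also ‖x‖, ‖w‖ ≤ (‖w - x‖ + ‖w + x‖) / 2, the integrand at x is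
at most a constant times ‖x‖ (‖w - x‖⁻³ + ‖w + x‖⁻³). Since ‖u‖⁻³ is locally integrable on
ℂ² ≅ ℝ⁴, the integrals of these kernels over the bounded set D' are bounded uniformly in ‖x‖ ≤ 1,
so 𝒦φ(x) = O(‖x‖), while 𝒦φ(0) = 0 because f(w, 0) = 0.
-/

open Filter Metric Module Topology Bornology

section InverseNormPower

variable {E : Type*} [NormedAddCommGroup E] [NormedSpace ℝ E] [FiniteDimensional ℝ E]
  [MeasurableSpace E] [BorelSpace E] {μ : Measure E} [μ.IsAddHaarMeasure] {n : ℕ}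

lemma setLIntegral_closedBall_inv_norm_pow_lt_top (hn : n < finrank ℝ E) (R : ℝ) :
    ∫⁻ u in closedBall 0 R, ENNReal.ofReal (‖u‖ ^ n)⁻¹ ∂μ < ⊤ := by
  have hloc : LocallyIntegrable (fun u : E => (‖u‖ ^ n)⁻¹) μ := by
    refine locallyIntegrable_of_norm_le_rpow (C := 1) (α := n) (by omega)
      (by exact_mod_cast hn) (Eventually.of_forall fun u => ?_)
      (measurable_norm.pow_const n).inv.aestronglyMeasurable
    rw [Real.rpow_neg (norm_nonneg u), Real.rpow_natCast, one_mul,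
      Real.norm_of_nonneg (by positivity)]
  exact (hloc.integrableOn_isCompact (isCompact_closedBall 0 R)).setLIntegral_lt_top

lemma exists_setLIntegral_inv_norm_sub_pow_le {s : Set E} (hs : IsBounded s)
    (hn : n < finrank ℝ E) (ρ : ℝ) :
    ∃ J < ⊤, ∀ y : E, ‖y‖ ≤ ρ → ∫⁻ w in s, ENNReal.ofReal (‖w - y‖ ^ n)⁻¹ ∂μ ≤ J := by
  obtain ⟨R, hR⟩ := hs.subset_closedBall 0
  set k : E → ENNReal := fun u => ENNReal.ofReal (‖u‖ ^ n)⁻¹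
  have hk : Measurable k := (measurable_norm.pow_const n).inv.ennreal_ofReal
  refine ⟨_, setLIntegral_closedBall_inv_norm_pow_lt_top (μ := μ) hn (R + ρ), fun y hy => ?_⟩
  calc ∫⁻ w in s, k (w - y) ∂μ
      ≤ ∫⁻ w in s, (closedBall 0 (R + ρ)).indicator k (w - y) ∂μ := by
        refine setLIntegral_mono ((hk.indicator measurableSet_closedBall).comp
          (measurable_id.sub_const y)) fun w hw => ?_
        have hw' : w - y ∈ closedBall (0 : E) (R + ρ) := by
          have := mem_closedBall_zero_iff.1 (hR hw)
          rw [mem_closedBall_zero_iff]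
          linarith [norm_sub_le w y]
        simp [hw']
    _ ≤ ∫⁻ w, (closedBall 0 (R + ρ)).indicator k (w - y) ∂μ := setLIntegral_le_lintegral _ _
    _ = ∫⁻ u in closedBall 0 (R + ρ), k u ∂μ := by
        rw [lintegral_sub_right_eq_self, lintegral_indicator measurableSet_closedBall]

end InverseNormPower

local notation "ℂ²" => EuclideanSpace ℂ (Fin 2)

lemma finrank_real_euclideanSpace_complex_two : finrank ℝ ℂ² = 4 := by
  have := finrank_mul_finrank ℝ ℂ ℂ²
  rw [finrank_euclideanSpace_fin, Complex.finrank_real_complex] at this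
  omega

lemma norm_apply_mul_apply_le {ι : Type*} [Fintype ι] (x : EuclideanSpace ℂ ι) (i j : ι) :
    ‖x i * x j‖ ≤ ‖x‖ ^ 2 := by
  rw [norm_mul, sq]
  exact mul_le_mul (PiLp.norm_apply_le x i) (PiLp.norm_apply_le x j) (norm_nonneg _)
    (norm_nonneg _)

noncomputable def alpha (w x : ℂ²) : ℝ :=
  √(‖w 0 ^ 2 - x 0 ^ 2‖ ^ 2 + ‖w 1 ^ 2 - x 1 ^ 2‖ ^ 2 + ‖w 0 * w 1 - x 0 * x 1‖ ^ 2)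

lemma norm_sq_add_mul_norm_sq_add_le (u₀ u₁ v₀ v₁ : ℂ) :
    (‖u₀‖ ^ 2 + ‖u₁‖ ^ 2) * (‖v₀‖ ^ 2 + ‖v₁‖ ^ 2) ≤
      4 * ‖u₀ * v₀‖ ^ 2 + 4 * ‖u₁ * v₁‖ ^ 2 + ‖u₀ * v₁ + u₁ * v₀‖ ^ 2 := by
  have h₁ : ‖u₀ * v₁‖ ≤ ‖u₀ * v₁ + u₁ * v₀‖ + ‖u₁ * v₀‖ := norm_le_add_norm_add _ _
  have h₂ : ‖u₁ * v₀‖ ≤ ‖u₀ * v₁ + u₁ * v₀‖ + ‖u₀ * v₁‖ := by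
    rw [add_comm (u₀ * v₁)]; exact norm_le_add_norm_add _ _
  have h₃ : (‖u₀ * v₁‖ - ‖u₁ * v₀‖) ^ 2 ≤ ‖u₀ * v₁ + u₁ * v₀‖ ^ 2 :=
    sq_le_sq' (by linarith) (by linarith)
  simp only [norm_mul] at h₃ ⊢
  nlinarith [sq_nonneg (‖u₀‖ * ‖v₀‖ - ‖u₁‖ * ‖v₁‖)]

lemma norm_sub_mul_norm_add_le_two_mul_alpha (w x : ℂ²) :
    ‖w - x‖ * ‖w + x‖ ≤ 2 * alpha w x := by
  rw [← div_le_iff₀' two_pos, alpha, Real.le_sqrt (by positivity) (by positivity)]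
  have key := norm_sq_add_mul_norm_sq_add_le (w 0 - x 0) (w 1 - x 1) (w 0 + x 0) (w 1 + x 1)
  rw [show (w 0 - x 0) * (w 1 + x 1) + (w 1 - x 1) * (w 0 + x 0) =
      2 * (w 0 * w 1 - x 0 * x 1) by ring,
    show (w 0 - x 0) * (w 0 + x 0) = w 0 ^ 2 - x 0 ^ 2 by ring,
    show (w 1 - x 1) * (w 1 + x 1) = w 1 ^ 2 - x 1 ^ 2 by ring, norm_mul, Complex.norm_two] at key
  have hnorms : ‖w - x‖ ^ 2 * ‖w + x‖ ^ 2 =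
      (‖w 0 - x 0‖ ^ 2 + ‖w 1 - x 1‖ ^ 2) * (‖w 0 + x 0‖ ^ 2 + ‖w 1 + x 1‖ ^ 2) := by
    simp only [EuclideanSpace.norm_sq_eq, Fin.sum_univ_two, PiLp.sub_apply, PiLp.add_apply]
  rw [div_pow, mul_pow, hnorms]
  linarith

lemma sq_mul_sq_div_mul_pow_three_le {X Y a b : ℝ} (hX : 0 ≤ X) (hY : 0 ≤ Y) (ha : 0 < a)
    (hb : 0 < b) (hXab : 2 * X ≤ a + b) (hYab : 2 * Y ≤ a + b) :
    X ^ 2 * Y ^ 2 / (a * b) ^ 3 ≤ X * ((a ^ 3)⁻¹ + (b ^ 3)⁻¹) := by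
  wlog hab : a ≤ b generalizing a b
  · rw [mul_comm a, add_comm (a ^ 3)⁻¹]
    exact this hb ha (by linarith) (by linarith) (by linarith)
  have hXb : X ≤ b := by linarith
  have hYb : Y ≤ b := by linarith
  calc X ^ 2 * Y ^ 2 / (a * b) ^ 3 ≤ X * b ^ 3 / (a * b) ^ 3 := by
        gcongr ?_ / _
        calc X ^ 2 * Y ^ 2 = X * (X * Y ^ 2) := by ring
          _ ≤ X * (b * b ^ 2) := by gcongr
          _ = X * b ^ 3 := by ring
    _ = X * (a ^ 3)⁻¹ := by field_simp
    _ ≤ X * ((a ^ 3)⁻¹ + (b ^ 3)⁻¹) := by gcongr; exact le_add_of_nonneg_right (by positivity)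

lemma alpha_eq_zero_of_mul_eq_zero {w x : ℂ²} (h : ‖w - x‖ * ‖w + x‖ = 0) : alpha w x = 0 := by
  rcases mul_eq_zero.1 h with h | h
  · obtain rfl := sub_eq_zero.1 (norm_eq_zero.1 h)
    simp [alpha]
  · obtain rfl := eq_neg_of_add_eq_zero_left (norm_eq_zero.1 h)
    simp [alpha]

lemma sq_mul_sq_div_alpha_pow_three_le (w x : ℂ²) :
    ‖x‖ ^ 2 * ‖w‖ ^ 2 / alpha w x ^ 3 ≤ 8 * ‖x‖ * ((‖w - x‖ ^ 3)⁻¹ + (‖w + x‖ ^ 3)⁻¹) := by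
  rcases (mul_nonneg (norm_nonneg (w - x)) (norm_nonneg (w + x))).eq_or_lt' with h | h
  -- where α vanishes, the left side is 0 by the convention a / 0 = 0
  · rw [alpha_eq_zero_of_mul_eq_zero h, zero_pow three_ne_zero, div_zero]
    positivity
  have hx : 2 * ‖x‖ ≤ ‖w - x‖ + ‖w + x‖ := by
    calc 2 * ‖x‖ = ‖(w + x) - (w - x)‖ := by
          rw [show (w + x) - (w - x) = (2 : ℝ) • x by rw [two_smul]; abel, norm_smul,
            Real.norm_two]
      _ ≤ ‖w + x‖ + ‖w - x‖ := norm_sub_le _ _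
      _ = ‖w - x‖ + ‖w + x‖ := add_comm _ _
  have hw : 2 * ‖w‖ ≤ ‖w - x‖ + ‖w + x‖ := by
    calc 2 * ‖w‖ = ‖(w - x) + (w + x)‖ := by
          rw [show (w - x) + (w + x) = (2 : ℝ) • w by rw [two_smul]; abel, norm_smul,
            Real.norm_two]
      _ ≤ ‖w - x‖ + ‖w + x‖ := norm_add_le _ _
  have hα : ‖w - x‖ * ‖w + x‖ / 2 ≤ alpha w x := by
    linarith [norm_sub_mul_norm_add_le_two_mul_alpha w x]
  calc ‖x‖ ^ 2 * ‖w‖ ^ 2 / alpha w x ^ 3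
      ≤ ‖x‖ ^ 2 * ‖w‖ ^ 2 / (‖w - x‖ * ‖w + x‖ / 2) ^ 3 := by gcongr
    _ = 8 * (‖x‖ ^ 2 * ‖w‖ ^ 2 / (‖w - x‖ * ‖w + x‖) ^ 3) := by ring
    _ ≤ 8 * (‖x‖ * ((‖w - x‖ ^ 3)⁻¹ + (‖w + x‖ ^ 3)⁻¹)) := by
        gcongr
        exact sq_mul_sq_div_mul_pow_three_le (norm_nonneg _) (norm_nonneg _)
          (pos_of_mul_pos_left h (norm_nonneg _)) (pos_of_mul_pos_right h (norm_nonneg _)) hx hw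
    _ = 8 * ‖x‖ * ((‖w - x‖ ^ 3)⁻¹ + (‖w + x‖ ^ 3)⁻¹) := by ring

lemma norm_div_alpha_pow_three_le {z : ℂ} {w x : ℂ²} {c : ℝ} (hc : 0 ≤ c)
    (hz : ‖z‖ ≤ c * ‖x‖ ^ 2 * ‖w‖ ^ 2) :
    ‖z / ((alpha w x ^ 3 : ℝ) : ℂ)‖ ≤
      8 * c * ‖x‖ * ((‖w - x‖ ^ 3)⁻¹ + (‖w + x‖ ^ 3)⁻¹) := by
  have hα : 0 ≤ alpha w x := Real.sqrt_nonneg _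
  rw [norm_div, Complex.norm_real, Real.norm_of_nonneg (by positivity)]
  calc ‖z‖ / alpha w x ^ 3 ≤ c * (‖x‖ ^ 2 * ‖w‖ ^ 2 / alpha w x ^ 3) := by
        rw [← mul_div_assoc, ← mul_assoc]; gcongr
    _ ≤ c * (8 * ‖x‖ * ((‖w - x‖ ^ 3)⁻¹ + (‖w + x‖ ^ 3)⁻¹)) := by
        gcongr; exact sq_mul_sq_div_alpha_pow_three_le w x
    _ = _ := by ring

lemma tendsto_setIntegral_div_alpha_pow_three {s : Set ℂ²} (hs : IsBounded s)
    {N : ℂ² → ℂ² → ℂ} {c : ℝ} (hc : 0 ≤ c)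
    (hN : ∀ x, ∀ w ∈ s, ‖N w x‖ ≤ c * ‖x‖ ^ 2 * ‖w‖ ^ 2) :
    Tendsto (fun x => ∫ w in s, N w x / ((alpha w x ^ 3 : ℝ) : ℂ)) (𝓝 0) (𝓝 0) := by
  set k : ℂ² → ENNReal := fun u => ENNReal.ofReal (‖u‖ ^ 3)⁻¹
  obtain ⟨J, hJ, hsJ⟩ := exists_setLIntegral_inv_norm_sub_pow_le (μ := volume) (n := 3) hs
    (by rw [finrank_real_euclideanSpace_complex_two]; norm_num) 1
  have hbound : ∀ x : ℂ², ‖x‖ ≤ 1 →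
      ‖∫ w in s, N w x / ((alpha w x ^ 3 : ℝ) : ℂ)‖ ≤ 8 * c * ‖x‖ * (J + J).toReal := by
    intro x hx
    rw [← ENNReal.toReal_ofReal (by positivity : 0 ≤ 8 * c * ‖x‖), ← ENNReal.toReal_mul]
    refine (norm_integral_le_lintegral_norm _).trans (ENNReal.toReal_mono
      (ENNReal.mul_ne_top ENNReal.ofReal_ne_top (ENNReal.add_ne_top.2 ⟨hJ.ne, hJ.ne⟩)) ?_)
    calc ∫⁻ w in s, ENNReal.ofReal ‖N w x / ((alpha w x ^ 3 : ℝ) : ℂ)‖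
        ≤ ∫⁻ w in s, ENNReal.ofReal (8 * c * ‖x‖) * (k (w - x) + k (w + x)) := by
          refine setLIntegral_mono (by fun_prop) fun w hw => ?_
          rw [← ENNReal.ofReal_add (by positivity) (by positivity),
            ← ENNReal.ofReal_mul (by positivity)]
          exact ENNReal.ofReal_le_ofReal (norm_div_alpha_pow_three_le hc (hN x w hw))
      _ = ENNReal.ofReal (8 * c * ‖x‖) * ((∫⁻ w in s, k (w - x)) + ∫⁻ w in s, k (w + x)) := by
          rw [lintegral_const_mul _ (by fun_prop), lintegral_add_left (by fun_prop)]
      _ ≤ ENNReal.ofReal (8 * c * ‖x‖) * (J + J) := by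
          gcongr
          · exact hsJ x hx
          · simpa only [sub_neg_eq_add] using hsJ (-x) (by rwa [norm_neg])
  refine squeeze_zero_norm' (eventually_nhds_iff_ball.2 ⟨1, one_pos, fun x hx => hbound x ?_⟩) ?_
  · exact (mem_ball_zero_iff.1 hx).le
  · simpa using (tendsto_norm_zero.const_mul (8 * c)).mul_const (J + J).toReal

theorem stmt18_general (D' : Set (EuclideanSpace ℂ (Fin 2)))
    (hD'b : Bornology.IsBounded D')
    (g : EuclideanSpace ℂ (Fin 2) → EuclideanSpace ℂ (Fin 2) → ℂ)
    (Mg : ℝ) (hg : ∀ w x, norm (g w x) ≤ Mg)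
    (f : EuclideanSpace ℂ (Fin 2) → EuclideanSpace ℂ (Fin 2) → ℂ)
    (hf : (f = fun _ x => (x 0) ^ 2) ∨ (f = fun _ x => x 0 * x 1) ∨ (f = fun _ x => (x 1) ^ 2))
    (φ : EuclideanSpace ℂ (Fin 2) → ℂ)
    (Mφ : ℝ) (hφ : ∀ w ∈ D', norm (φ w) ≤ Mφ * ‖w‖ ^ 2) :
    ContinuousAt (fun x : EuclideanSpace ℂ (Fin 2) =>
      ∫ w in D', g w x * f w x * φ w /
        ((Real.sqrt (norm ((w 0) ^ 2 - (x 0) ^ 2) ^ 2 +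
            norm ((w 1) ^ 2 - (x 1) ^ 2) ^ 2 +
            norm (w 0 * w 1 - x 0 * x 1) ^ 2) ^ 3 : ℝ) : ℂ)) 0 ∧
    (∫ w in D', g w 0 * f w 0 * φ w /
        ((Real.sqrt (norm ((w 0) ^ 2 - ((0 : EuclideanSpace ℂ (Fin 2)) 0) ^ 2) ^ 2 +
            norm ((w 1) ^ 2 - ((0 : EuclideanSpace ℂ (Fin 2)) 1) ^ 2) ^ 2 +
            norm (w 0 * w 1 - ((0 : EuclideanSpace ℂ (Fin 2)) 0) *
              ((0 : EuclideanSpace ℂ (Fin 2)) 1)) ^ 2) ^ 3 : ℝ) : ℂ)) = 0 := by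
  have hf_le : ∀ w x, ‖f w x‖ ≤ ‖x‖ ^ 2 := by
    rcases hf with rfl | rfl | rfl <;> intro w x <;>
      simpa only [sq] using norm_apply_mul_apply_le x _ _
  have hf_zero : ∀ w, f w 0 = 0 := by
    rcases hf with rfl | rfl | rfl <;> simp
  have hMg : 0 ≤ Mg := (norm_nonneg _).trans (hg 0 0)
  have hnum : ∀ x, ∀ w ∈ D', ‖g w x * f w x * φ w‖ ≤ Mg * |Mφ| * ‖x‖ ^ 2 * ‖w‖ ^ 2 := by
    intro x w hw
    rw [norm_mul, norm_mul]
    calc ‖g w x‖ * ‖f w x‖ * ‖φ w‖ ≤ Mg * ‖x‖ ^ 2 * (|Mφ| * ‖w‖ ^ 2) := by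
          gcongr
          · exact hg w x
          · exact hf_le w x
          · exact (hφ w hw).trans (by gcongr; exact le_abs_self Mφ)
      _ = Mg * |Mφ| * ‖x‖ ^ 2 * ‖w‖ ^ 2 := by ring
  have hvalue_zero : (∫ w in D', g w 0 * f w 0 * φ w /
      ((alpha w 0 ^ 3 : ℝ) : ℂ)) = 0 := by
    simp [hf_zero]
  have hlimit := tendsto_setIntegral_div_alpha_pow_three hD'b (by positivity) hnum
  rw [← hvalue_zero] at hlimit
  exact ⟨hlimit, hvalue_zero⟩

theorem stmt18 (D D' : Set (EuclideanSpace ℂ (Fin 2))) (hDo : IsOpen D) (hD'o : IsOpen D')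
    (hDb : Bornology.IsBounded D) (hD'b : Bornology.IsBounded D')
    (g : EuclideanSpace ℂ (Fin 2) → EuclideanSpace ℂ (Fin 2) → ℂ)
    (hgm : Measurable fun p : EuclideanSpace ℂ (Fin 2) × EuclideanSpace ℂ (Fin 2) => g p.1 p.2)
    (Mg : ℝ) (hg : ∀ w x, norm (g w x) ≤ Mg)
    (f : EuclideanSpace ℂ (Fin 2) → EuclideanSpace ℂ (Fin 2) → ℂ)
    (hf : (f = fun _ x => (x 0) ^ 2) ∨ (f = fun _ x => x 0 * x 1) ∨ (f = fun _ x => (x 1) ^ 2))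
    (φ : EuclideanSpace ℂ (Fin 2) → ℂ) (hφm : Measurable φ)
    (Mφ : ℝ) (hφ : ∀ w ∈ D', norm (φ w) ≤ Mφ * ‖w‖ ^ 2) :
    ContinuousAt (fun x : EuclideanSpace ℂ (Fin 2) =>
      ∫ w in D', g w x * f w x * φ w /
        ((Real.sqrt (norm ((w 0) ^ 2 - (x 0) ^ 2) ^ 2 +
            norm ((w 1) ^ 2 - (x 1) ^ 2) ^ 2 +
            norm (w 0 * w 1 - x 0 * x 1) ^ 2) ^ 3 : ℝ) : ℂ)) 0 ∧
    (∫ w in D', g w 0 * f w 0 * φ w /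
        ((Real.sqrt (norm ((w 0) ^ 2 - ((0 : EuclideanSpace ℂ (Fin 2)) 0) ^ 2) ^ 2 +
            norm ((w 1) ^ 2 - ((0 : EuclideanSpace ℂ (Fin 2)) 1) ^ 2) ^ 2 +
            norm (w 0 * w 1 - ((0 : EuclideanSpace ℂ (Fin 2)) 0) *
              ((0 : EuclideanSpace ℂ (Fin 2)) 1)) ^ 2) ^ 3 : ℝ) : ℂ)) = 0 :=
  stmt18_general D' hD'b g Mg hg f hf φ Mφ hφ
end
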